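/- Let (X,d) be a c₀-roughly geodesic δ-hyperbolic metric space with basepoint o. There exists C ≥ 0 (depending only on δ and c₀) such that for any two Cauchy–Gromov sequences (xₙ), (yₙ) in X which are not equivalent (i.e. liminf_{n} (xₙ,yₙ)_o < ∞) there is a map γ : ℝ → X with |d(γ(s),γ(t)) − |s−t|| ≤ C for all s,t ∈ ℝ, with lim_{t→−∞} liminf_{n→∞} (γ(t),xₙ)_o = ∞ and lim_{t→+∞} liminf_{n→∞} (γ(t),yₙ)_o = ∞. -/

import Mathlib

open Filter

/-- The Gromov product `(x,y)_o` in a metric space. -/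
noncomputable def gromovProd {X : Type*} [MetricSpace X] (o x y : X) : ℝ :=
  (dist o x + dist o y - dist x y) / 2

/-- `X` is `δ`-hyperbolic. -/
def HyperbolicWith (X : Type*) [MetricSpace X] (δ : ℝ) : Prop :=
  ∀ w x y z : X, min (gromovProd w x y) (gromovProd w y z) - δ ≤ gromovProd w x z

/-- `X` is `C`-roughly geodesic. -/
def RoughlyGeodesicWith (X : Type*) [MetricSpace X] (C : ℝ) : Prop :=
  ∀ x y : X, ∃ a b : ℝ, a ≤ b ∧ ∃ γ : ℝ → X, γ a = x ∧ γ b = y ∧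
    ∀ s ∈ Set.Icc a b, ∀ t ∈ Set.Icc a b, abs (dist (γ s) (γ t) - |s - t|) ≤ C

/-- A sequence is Cauchy–Gromov if the Gromov products `(xₙ, xₘ)_o` tend to
infinity as `n, m → ∞`. -/
def CauchyGromov {X : Type*} [MetricSpace X] (o : X) (x : ℕ → X) : Prop :=
  ∀ M : ℝ, ∃ N : ℕ, ∀ m ≥ N, ∀ n ≥ N, M ≤ gromovProd o (x m) (x n)

/-!
Since the sequences are not equivalent, hyperbolicity pins all cross products `(xₘ, yₙ)_o`
with `m, n` large to within `2δ` of a single number `r`. For `t ≥ 0` let `γ t` be the point at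
height `R + t` (with `R` a little above `r`) on a rough geodesic from `o` to a term of `(yₙ)`,
chosen so far out that the targets used for heights `s ≤ t` still have Gromov product at least
`R + s`; for `t < 0` do the same with `(xₙ)` at height `R - t`. Two points on the same half are
then at distance `≈ |s - t|` because their targets fellow-travel past both heights, and two
points on opposite halves are at distance `≈ (R - s) + (R + t) - 2r` because the rough geodesics
towards `xₘ` and `yₙ` branch at height `≈ r`.
-/

section

variable {X : Type*} [MetricSpace X]

theorem gromovProd_comm (o x y : X) : gromovProd o x y = gromovProd o y x := by
  unfold gromovProd; rw [dist_comm x y]; ring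

theorem gromovProd_nonneg (o x y : X) : 0 ≤ gromovProd o x y := by
  have := dist_triangle_left x y o
  unfold gromovProd; linarith

theorem gromovProd_le_dist (o x y : X) : gromovProd o x y ≤ dist o x := by
  have := dist_triangle o x y
  unfold gromovProd; linarith

theorem gromovProd_self (o x : X) : gromovProd o x x = dist o x := by
  simp [gromovProd]

theorem dist_eq_sub_gromovProd (o x y : X) :
    dist x y = dist o x + dist o y - 2 * gromovProd o x y := by
  unfold gromovProd; ring

namespace HyperbolicWith

variable {δ : ℝ}

theorem nonneg (h : HyperbolicWith X δ) (w : X) : 0 ≤ δ := by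
  have := h w w w w
  rw [min_self] at this
  linarith

theorem le_gromovProd (h : HyperbolicWith X δ) {w x y z : X} {a : ℝ}
    (hxy : a ≤ gromovProd w x y) (hyz : a ≤ gromovProd w y z) : a - δ ≤ gromovProd w x z :=
  (sub_le_sub_right (le_min hxy hyz) δ).trans (h w x y z)

theorem gromovProd_le_of_lt (h : HyperbolicWith X δ) {w x y z : X}
    (hlt : gromovProd w x z + δ < gromovProd w x y) :
    gromovProd w y z ≤ gromovProd w x z + δ :=
  (min_le_iff.mp (by linarith [h w x y z])).resolve_left (by linarith)

theorem abs_gromovProd_sub_le (h : HyperbolicWith X δ) {w x y x' y' : X}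
    (hx : gromovProd w x y + 2 * δ < gromovProd w x x')
    (hy : gromovProd w x y + 2 * δ < gromovProd w y y') :
    |gromovProd w x' y' - gromovProd w x y| ≤ 2 * δ := by
  have hδ := h.nonneg w
  have hxy' : gromovProd w x y - δ ≤ gromovProd w x y' := h.le_gromovProd le_rfl (by linarith)
  have hlower : gromovProd w x y - δ - δ ≤ gromovProd w x' y' :=
    h.le_gromovProd (by rw [gromovProd_comm w x' x]; linarith) hxy'
  have hx'y : gromovProd w x' y ≤ gromovProd w x y + δ := h.gromovProd_le_of_lt (by linarith)
  have hupper : gromovProd w y' x' ≤ gromovProd w y x' + δ :=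
    h.gromovProd_le_of_lt (by rw [gromovProd_comm w y x']; linarith)
  rw [gromovProd_comm w y' x', gromovProd_comm w y x'] at hupper
  exact abs_le.mpr ⟨by linarith, by linarith⟩

theorem exists_abs_gromovProd_sub_le (h : HyperbolicWith X δ) {o : X} {x y : ℕ → X}
    (hx : CauchyGromov o x) (hy : CauchyGromov o y)
    (hxy : ∃ B : ℝ, ∀ N : ℕ, ∃ n ≥ N, gromovProd o (x n) (y n) ≤ B) :
    ∃ r : ℝ, ∃ N : ℕ, ∀ m ≥ N, ∀ n ≥ N, |gromovProd o (x m) (y n) - r| ≤ 2 * δ := by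
  obtain ⟨B, hB⟩ := hxy
  obtain ⟨Nx, hNx⟩ := hx (B + 2 * δ + 1)
  obtain ⟨Ny, hNy⟩ := hy (B + 2 * δ + 1)
  obtain ⟨n₀, hn₀, hn₀B⟩ := hB (max Nx Ny)
  refine ⟨gromovProd o (x n₀) (y n₀), max Nx Ny, fun m hm n hn => h.abs_gromovProd_sub_le ?_ ?_⟩
  · linarith [hNx n₀ (le_of_max_le_left hn₀) m (le_of_max_le_left hm)]
  · linarith [hNy n₀ (le_of_max_le_right hn₀) n (le_of_max_le_right hn)]

theorem le_liminf_gromovProd (h : HyperbolicWith X δ) {o u z : X} {x : ℕ → X} {a : ℝ}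
    (hu : a ≤ gromovProd o u z) (hx : ∀ᶠ n in atTop, a ≤ gromovProd o z (x n)) :
    a - δ ≤ liminf (fun n => gromovProd o u (x n)) atTop :=
  le_liminf_of_le (isCoboundedUnder_ge_of_le atTop fun n => gromovProd_le_dist o u (x n))
    (hx.mono fun _ hn => h.le_gromovProd hu hn)

end HyperbolicWith

/-- What a point at parameter `σ` of a `c`-rough geodesic from `o` to `z` satisfies. -/
def OnRoughGeodesic (c : ℝ) (o z : X) (σ : ℝ) (u : X) : Prop :=
  |dist o u - σ| ≤ c ∧ σ - 3 / 2 * c ≤ gromovProd o u z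

theorem OnRoughGeodesic.nonneg {c σ : ℝ} {o z u : X} (hu : OnRoughGeodesic c o z σ u) : 0 ≤ c :=
  (abs_nonneg _).trans hu.1

namespace RoughlyGeodesicWith

variable {c : ℝ}

theorem nonneg (h : RoughlyGeodesicWith X c) (x : X) : 0 ≤ c := by
  obtain ⟨a, b, hab, γ, -, -, hγ⟩ := h x x
  simpa using hγ a ⟨le_rfl, hab⟩ a ⟨le_rfl, hab⟩

theorem exists_onRoughGeodesic (h : RoughlyGeodesicWith X c) (o z : X) :
    ∃ p : ℝ → X, ∀ σ, 0 ≤ σ → σ ≤ dist o z - c → OnRoughGeodesic c o z σ (p σ) := by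
  obtain ⟨a, b, hab, γ, rfl, rfl, hγ⟩ := h o z
  have hγ' : ∀ s t, a ≤ s → s ≤ t → t ≤ b → |dist (γ s) (γ t) - (t - s)| ≤ c := by
    intro s t has hst htb
    simpa [abs_sub_comm s t, abs_of_nonneg (sub_nonneg.2 hst)] using
      hγ s ⟨has, hst.trans htb⟩ t ⟨has.trans hst, htb⟩
  refine ⟨fun σ => γ (a + σ), fun σ hσ hσz => ?_⟩
  have hab' := abs_le.mp (hγ' a b le_rfl hab le_rfl)
  have hσb : a + σ ≤ b := by linarith
  have hstart := abs_le.mp (hγ' a (a + σ) le_rfl (by linarith) hσb)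
  have hend := abs_le.mp (hγ' (a + σ) b (by linarith) hσb le_rfl)
  refine ⟨abs_le.mpr ⟨by linarith, by linarith⟩, ?_⟩
  unfold gromovProd
  linarith

end RoughlyGeodesicWith

def IsRoughRay (c R : ℝ) (o : X) (e ρ : ℝ → X) : Prop :=
  (∀ t, 0 ≤ t → OnRoughGeodesic c o (e t) (R + t) (ρ t)) ∧
    ∀ s t, 0 ≤ s → s ≤ t → R + s ≤ gromovProd o (e s) (e t)

noncomputable def joinRays (ρ₁ ρ₂ : ℝ → X) (t : ℝ) : X :=
  if 0 ≤ t then ρ₂ t else ρ₁ (-t)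

namespace HyperbolicWith

variable {δ c σ τ R : ℝ} {o u v : X}

theorem abs_dist_sub_le_of_le_gromovProd (h : HyperbolicWith X δ) {z w : X}
    (hu : OnRoughGeodesic c o z σ u) (hv : OnRoughGeodesic c o w τ v)
    (hστ : σ ≤ τ) (hzw : σ ≤ gromovProd o z w) :
    |dist u v - (τ - σ)| ≤ 5 * c + 4 * δ := by
  have hδ := h.nonneg o
  have hc := hu.nonneg
  obtain ⟨hou, huz⟩ := hu
  obtain ⟨hov, hvw⟩ := hv
  rw [abs_le] at hou hov
  rw [gromovProd_comm] at hvw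
  have hzv : σ - 3 / 2 * c - δ ≤ gromovProd o z v :=
    h.le_gromovProd (y := w) (by linarith) (by linarith)
  have huv : σ - 3 / 2 * c - δ - δ ≤ gromovProd o u v :=
    h.le_gromovProd (y := z) (by linarith) hzv
  have := dist_eq_sub_gromovProd o u v
  have := dist_triangle o u v
  exact abs_le.mpr ⟨by linarith, by linarith⟩

theorem abs_dist_sub_le_of_gromovProd_lt (h : HyperbolicWith X δ) {x y : X}
    (hu : OnRoughGeodesic c o x σ u) (hv : OnRoughGeodesic c o y τ v)
    (hσ : gromovProd o x y + 3 / 2 * c + 2 * δ < σ)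
    (hτ : gromovProd o x y + 3 / 2 * c + 2 * δ < τ) :
    |dist u v - (σ + τ - 2 * gromovProd o x y)| ≤ 2 * c + 4 * δ := by
  have hδ := h.nonneg o
  obtain ⟨hou, hux⟩ := hu
  obtain ⟨hov, hvy⟩ := hv
  rw [abs_le] at hou hov
  rw [gromovProd_comm] at hux hvy
  have huy : gromovProd o u y ≤ gromovProd o x y + δ := h.gromovProd_le_of_lt (by linarith)
  rw [gromovProd_comm] at huy
  have hvu : gromovProd o v u ≤ gromovProd o y u + δ := h.gromovProd_le_of_lt (by linarith)
  rw [gromovProd_comm] at hvu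
  have hxv : gromovProd o x y - δ ≤ gromovProd o x v :=
    h.le_gromovProd (y := y) le_rfl (by linarith)
  have huv : gromovProd o x y - δ - δ ≤ gromovProd o u v :=
    h.le_gromovProd (y := x) (by rw [gromovProd_comm o u x]; linarith) hxv
  have := dist_eq_sub_gromovProd o u v
  exact abs_le.mpr ⟨by linarith, by linarith⟩

theorem abs_dist_sub_le_of_isRoughRay (h : HyperbolicWith X δ) {e ρ : ℝ → X}
    (hρ : IsRoughRay c R o e ρ) {s t : ℝ} (hs : 0 ≤ s) (hst : s ≤ t) :
    |dist (ρ s) (ρ t) - (t - s)| ≤ 5 * c + 4 * δ := by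
  have := h.abs_dist_sub_le_of_le_gromovProd (hρ.1 s hs) (hρ.1 t (hs.trans hst))
    (by linarith) (hρ.2 s t hs hst)
  rwa [add_sub_add_left_eq_sub] at this

theorem abs_dist_joinRays_sub_le (h : HyperbolicWith X δ) {r : ℝ} {e₁ e₂ ρ₁ ρ₂ : ℝ → X}
    (h₁ : IsRoughRay c R o e₁ ρ₁) (h₂ : IsRoughRay c R o e₂ ρ₂)
    (he : ∀ s t, |gromovProd o (e₁ s) (e₂ t) - r| ≤ 2 * δ) (hR : R = r + 2 * c + 4 * δ + 1)
    (s t : ℝ) :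
    abs (dist (joinRays ρ₁ ρ₂ s) (joinRays ρ₁ ρ₂ t) - |s - t|) ≤ 6 * c + 16 * δ + 2 := by
  wlog hst : s ≤ t generalizing s t
  · rw [dist_comm, abs_sub_comm s t]
    exact this t s (le_of_not_ge hst)
  have hδ := h.nonneg o
  have hc := (h₁.1 0 le_rfl).nonneg
  rw [abs_sub_comm s t, abs_of_nonneg (sub_nonneg.2 hst)]
  rcases le_or_gt 0 s with hs | hs
  · simp only [joinRays, if_pos hs, if_pos (hs.trans hst)]
    exact (h.abs_dist_sub_le_of_isRoughRay h₂ hs hst).trans (by linarith)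
  rcases lt_or_ge t 0 with ht | ht
  · simp only [joinRays, if_neg (not_le.2 hs), if_neg (not_le.2 ht)]
    have := h.abs_dist_sub_le_of_isRoughRay h₁ (neg_nonneg.2 ht.le) (neg_le_neg hst)
    rw [dist_comm, neg_sub_neg] at this
    exact this.trans (by linarith)
  simp only [joinRays, if_neg (not_le.2 hs), if_pos ht]
  have hq := abs_le.mp (he (-s) t)
  have := abs_le.mp <| h.abs_dist_sub_le_of_gromovProd_lt (h₁.1 (-s) (by linarith)) (h₂.1 t ht)
    (by linarith) (by linarith)
  exact abs_le.mpr ⟨by linarith, by linarith⟩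

end HyperbolicWith

theorem CauchyGromov.exists_monotone_index {o : X} {x : ℕ → X} (hx : CauchyGromov o x)
    (A : ℝ) (N : ℕ) :
    ∃ φ : ℕ → ℕ, Monotone φ ∧ (∀ k, N ≤ φ k) ∧
      ∀ k, ∀ m ≥ φ k, ∀ n ≥ φ k, A + k ≤ gromovProd o (x m) (x n) := by
  choose Nx hNx using hx
  let f (k : ℕ) := max N (Nx (A + k))
  have hf (k : ℕ) : N ≤ partialSups f k ∧ Nx (A + k) ≤ partialSups f k :=
    max_le_iff.mp (le_partialSups f k)
  exact ⟨partialSups f, (partialSups f).monotone, fun k => (hf k).1,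
    fun k m hm n hn => hNx _ m ((hf k).2.trans hm) n ((hf k).2.trans hn)⟩

theorem CauchyGromov.exists_isRoughRay {δ c R : ℝ} {o : X} {x : ℕ → X}
    (hX : RoughlyGeodesicWith X c) (h : HyperbolicWith X δ) (hx : CauchyGromov o x)
    (hR : 0 ≤ R) (N : ℕ) :
    ∃ e ρ : ℝ → X, IsRoughRay c R o e ρ ∧ (∀ t, ∃ n ≥ N, e t = x n) ∧
      ∀ M, ∀ᶠ t in atTop, M ≤ liminf (fun n => gromovProd o (ρ t) (x n)) atTop := by
  have hc := hX.nonneg o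
  obtain ⟨φ, hφ_mono, hφN, hφ⟩ := hx.exists_monotone_index (R + c) N
  choose p hp using hX.exists_onRoughGeodesic o
  have hρ : IsRoughRay c R o (fun t => x (φ ⌈t⌉₊)) (fun t => p (x (φ ⌈t⌉₊)) (R + t)) := by
    refine ⟨fun t ht => hp _ _ (by linarith) ?_, fun s t hs hst => ?_⟩
    · have := hφ ⌈t⌉₊ _ le_rfl _ le_rfl
      rw [gromovProd_self] at this
      linarith [Nat.le_ceil t]
    · linarith [hφ ⌈s⌉₊ _ le_rfl _ (hφ_mono (Nat.ceil_mono hst)), Nat.le_ceil s]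
  refine ⟨_, _, hρ, fun t => ⟨_, hφN _, rfl⟩, fun M => ?_⟩
  filter_upwards [eventually_ge_atTop (max 0 (M - R + 3 / 2 * c + δ))] with t ht
  have hlim := h.le_liminf_gromovProd (x := x) (hρ.1 t (le_of_max_le_left ht)).2
    (eventually_ge_atTop (φ ⌈t⌉₊) |>.mono fun n hn => by
      linarith [hφ ⌈t⌉₊ _ le_rfl n hn, Nat.le_ceil t])
  linarith [le_of_max_le_right ht]

end

theorem exists_roughGeodesic_between_boundary_points_general
    {X : Type*} [MetricSpace X] (δ c₀ : ℝ)
    (hXhyp : HyperbolicWith X δ) (hXrg : RoughlyGeodesicWith X c₀) (o : X) :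
    ∃ C ≥ (0:ℝ), ∀ xs ys : ℕ → X, CauchyGromov o xs → CauchyGromov o ys →
      -- the two sequences are not equivalent: `liminf (xₙ,yₙ)_o < ∞`
      (∃ B : ℝ, ∀ N : ℕ, ∃ n ≥ N, gromovProd o (xs n) (ys n) ≤ B) →
      ∃ γ : ℝ → X,
        (∀ s t : ℝ, abs (dist (γ s) (γ t) - |s - t|) ≤ C) ∧
        (∀ M : ℝ, ∃ T : ℝ, ∀ t ≤ T,
          M ≤ liminf (fun n => gromovProd o (γ t) (xs n)) atTop) ∧
        (∀ M : ℝ, ∃ T : ℝ, ∀ t ≥ T,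
          M ≤ liminf (fun n => gromovProd o (γ t) (ys n)) atTop) := by
  have hδ := hXhyp.nonneg o
  have hc₀ := hXrg.nonneg o
  refine ⟨6 * c₀ + 16 * δ + 2, by positivity, fun xs ys hx hy hxy => ?_⟩
  obtain ⟨r, N, hr⟩ := hXhyp.exists_abs_gromovProd_sub_le hx hy hxy
  have hR : 0 ≤ r + 2 * c₀ + 4 * δ + 1 := by
    linarith [(abs_le.mp (hr N le_rfl N le_rfl)).2, gromovProd_nonneg o (xs N) (ys N)]
  obtain ⟨e₁, ρ₁, h₁, he₁, hlim₁⟩ := hx.exists_isRoughRay hXrg hXhyp hR N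
  obtain ⟨e₂, ρ₂, h₂, he₂, hlim₂⟩ := hy.exists_isRoughRay hXrg hXhyp hR N
  refine ⟨joinRays ρ₁ ρ₂, hXhyp.abs_dist_joinRays_sub_le h₁ h₂ (fun s t => ?_) rfl, fun M => ?_,
    fun M => ?_⟩
  · obtain ⟨m, hm, hm'⟩ := he₁ s
    obtain ⟨n, hn, hn'⟩ := he₂ t
    rw [hm', hn']
    exact hr m hm n hn
  · obtain ⟨T, hT⟩ := eventually_atBot.mp
      ((tendsto_neg_atBot_atTop.eventually (hlim₁ M)).and (eventually_lt_atBot 0))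
    exact ⟨T, fun t ht => by simpa [joinRays, not_le.2 (hT t ht).2] using (hT t ht).1⟩
  · obtain ⟨T, hT⟩ := eventually_atTop.mp ((hlim₂ M).and (eventually_ge_atTop 0))
    exact ⟨T, fun t ht => by simpa [joinRays, (hT t ht).2] using (hT t ht).1⟩

/-- In a roughly geodesic hyperbolic space, any two distinct boundary points
(represented by non-equivalent Cauchy–Gromov sequences) are joined by a two-sided
rough geodesic with uniform constant. -/
theorem exists_roughGeodesic_between_boundary_points
    {X : Type*} [MetricSpace X] (δ c₀ : ℝ) (hδ : 0 ≤ δ) (hc₀ : 0 ≤ c₀)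
    (hXhyp : HyperbolicWith X δ) (hXrg : RoughlyGeodesicWith X c₀) (o : X) :
    ∃ C ≥ (0:ℝ), ∀ xs ys : ℕ → X, CauchyGromov o xs → CauchyGromov o ys →
      -- the two sequences are not equivalent: `liminf (xₙ,yₙ)_o < ∞`
      (∃ B : ℝ, ∀ N : ℕ, ∃ n ≥ N, gromovProd o (xs n) (ys n) ≤ B) →
      ∃ γ : ℝ → X,
        (∀ s t : ℝ, abs (dist (γ s) (γ t) - |s - t|) ≤ C) ∧
        (∀ M : ℝ, ∃ T : ℝ, ∀ t ≤ T,
          M ≤ liminf (fun n => gromovProd o (γ t) (xs n)) atTop) ∧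
        (∀ M : ℝ, ∃ T : ℝ, ∀ t ≥ T,
          M ≤ liminf (fun n => gromovProd o (γ t) (ys n)) atTop) :=
  exists_roughGeodesic_between_boundary_points_general δ c₀ hXhyp hXrg o
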